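/- arXiv:2604.15473 — 2 statements merged into one kernel-verified Lean document; each statement's English description precedes it below -/
import Mathlib

section
/- Let B = ℂ[x, y, y₁, y₂, …] (countably many jet variables) with the five derivations v₁, …, v₅ defined on generators by: v₁(x) = 1 and v₁ vanishes on all other variables; v₂(y) = 1 and v₂ vanishes on all other variables; v₃(y) = x, v₃(y₁) = 1, and v₃ vanishes on all other variables; v₄(x) = y, v₄(y) = 0, v₄(y_j) = ψ_j, where ψ₁ = −y₁² and ψ_{j+1} = D(ψ_j) − y₁·y_{j+1} with D the total derivative determined by D(x) = 1, D(y) = y₁, D(y_j) = y_{j+1}; v₅(x) = x, v₅(y) = −y, v₅(y_j) = −(j+1)·y_j. Let w ∈ ℚ and suppose P ∈ ℂ[y₂, y₃, …] satisfies v₄(P) = −w·y₁·P and v₅(P) = −w·P. Then the element Δ_w(P) := y₂·D(P) − (w/3)·y₃·P (which again lies in ℂ[y₂, y₃, …]) satisfies v₄(Δ_w(P)) = −(w+4)·y₁·Δ_w(P) and v₅(Δ_w(P)) = −(w+4)·Δ_w(P), while v₁, v₂, v₃ annihilate both P and Δ_w(P). That is, Δ_w is a relative invariant derivation of weight 4: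 it maps relative invariants of weight w of the prolonged special affine algebra to relative invariants of weight w + 4. -/
/-!
Everything happens in `ℂ[y₂, y₃, …]`, which `D` preserves and on whose generators `v₁, v₂, v₃`
vanish. For `v₄` and `v₅` the key fact is the commutation relation `[v, D] = g • D`, with
`g = −y₁` for `v₄` and `g = −1` for `v₅`: on `ℂ[y₂, y₃, …]` it only needs checking on the
jet variables, where for `v₄` it is the recursion defining `ψ`. It turns the relative
invariance of `P` into a formula for `v(D P)`. With `ψ₂ = −3 y₁ y₂` and
`ψ₃ = −3 y₂² − 4 y₁ y₃` this computes `v₄(Δ_w(P))`; the coefficient `w/3` is exactly what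
cancels the `y₂² P` term contributed by `ψ₃`.
-/

open MvPolynomial

/-- The polynomial ring `B = ℂ[x, y, y₁, y₂, …]`, with variable indices
`0 ↦ x`, `1 ↦ y`, `j+1 ↦ y_j` for `j ≥ 1`. -/
abbrev Binf : Type := MvPolynomial ℕ ℂ

/-- The variable `x`. -/
noncomputable def xv : Binf := X 0

/-- The variable `y`. -/
noncomputable def yv : Binf := X 1

/-- The jet variable `y_j` (for `j ≥ 1`). -/
noncomputable def yj (j : ℕ) : Binf := if 1 ≤ j then X (j + 1) else 0

/-- The operator `Δ_w(P) = y₂·D(P) − (w/3)·y₃·P`. -/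
noncomputable def Δ (D : Derivation ℂ Binf Binf) (w : ℚ) (P : Binf) : Binf :=
  yj 2 * D P - C ((w / 3 : ℚ) : ℂ) * yj 3 * P

namespace Derivation

variable {R A M : Type*} [CommRing R] [CommRing A] [Algebra R A]

theorem map_eq_zero_of_mem_adjoin [AddCommGroup M] [Module A M] [Module R M]
    [IsScalarTower R A M] (D : Derivation R A M) {s : Set A} (h : ∀ a ∈ s, D a = 0)
    {a : A} (ha : a ∈ Algebra.adjoin R s) : D a = 0 :=
  eqOn_adjoin (D2 := 0) h ha

theorem map_mem_adjoin (D : Derivation R A A) {s : Set A}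
    (h : ∀ a ∈ s, D a ∈ Algebra.adjoin R s) {a : A} (ha : a ∈ Algebra.adjoin R s) :
    D a ∈ Algebra.adjoin R s := by
  induction ha using Algebra.adjoin_induction with
  | mem a ha => exact h a ha
  | algebraMap r => simp
  | add a b _ _ ha hb => simpa using add_mem ha hb
  | mul a b ha' hb' ha hb =>
    rw [leibniz, smul_eq_mul, smul_eq_mul]
    exact add_mem (mul_mem ha' hb) (mul_mem hb' ha)

theorem apply_apply_sub_eq_mul_of_mem_adjoin (v D : Derivation R A A) (g : A) {s : Set A}
    (h : ∀ a ∈ s, v (D a) - D (v a) = g * D a) {a : A} (ha : a ∈ Algebra.adjoin R s) :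
    v (D a) - D (v a) = g * D a := by
  have hbracket := eqOn_adjoin (D1 := ⁅v, D⁆) (D2 := g • D)
    (fun b hb => by simpa only [commutator_apply, smul_apply, smul_eq_mul] using h b hb) ha
  simpa only [commutator_apply, smul_apply, smul_eq_mul] using hbracket

end Derivation

noncomputable abbrev higherJetAlgebra : Subalgebra ℂ Binf := Algebra.adjoin ℂ (yj '' Set.Ici 2)

theorem yj_mem_higherJetAlgebra {j : ℕ} (hj : 2 ≤ j) : yj j ∈ higherJetAlgebra :=
  Algebra.subset_adjoin ⟨j, hj, rfl⟩

theorem map_eq_zero_of_mem_higherJetAlgebra (v : Derivation ℂ Binf Binf)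
    (hv : ∀ j, 2 ≤ j → v (yj j) = 0) {Q : Binf} (hQ : Q ∈ higherJetAlgebra) : v Q = 0 :=
  v.map_eq_zero_of_mem_adjoin (by rintro _ ⟨j, hj, rfl⟩; exact hv j hj) hQ

theorem C_ratCast_eq_three_mul (w : ℚ) : (C (w : ℂ) : Binf) = 3 * C ((w / 3 : ℚ) : ℂ) := by
  rw [← map_ofNat C 3, ← map_mul]
  congr 1
  push_cast
  ring

theorem C_ratCast_add_four_eq (w : ℚ) :
    (C ((w + 4 : ℚ) : ℂ) : Binf) = 3 * C ((w / 3 : ℚ) : ℂ) + 4 := by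
  rw [← C_ratCast_eq_three_mul, ← map_ofNat C 4, ← map_add]
  push_cast
  rfl

section Prolongation

variable {D : Derivation ℂ Binf Binf} {ψ : ℕ → Binf}
  (hDj : ∀ j, 1 ≤ j → D (yj j) = yj (j + 1))

section Membership

include hDj

theorem totalDerivative_mem_higherJetAlgebra {Q : Binf} (hQ : Q ∈ higherJetAlgebra) :
    D Q ∈ higherJetAlgebra := by
  refine D.map_mem_adjoin ?_ hQ
  rintro _ ⟨j, hj, rfl⟩
  rw [hDj j (le_trans one_le_two hj)]
  exact yj_mem_higherJetAlgebra (Nat.le_succ_of_le hj)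

theorem Delta_mem_higherJetAlgebra (w : ℚ) {P : Binf} (hP : P ∈ higherJetAlgebra) :
    Δ D w P ∈ higherJetAlgebra :=
  sub_mem (mul_mem (yj_mem_higherJetAlgebra le_rfl) (totalDerivative_mem_higherJetAlgebra hDj hP))
    (mul_mem (mul_mem (Subalgebra.algebraMap_mem _ _) (yj_mem_higherJetAlgebra (by norm_num))) hP)

end Membership

section Psi

variable (hψ1 : ψ 1 = -(yj 1) ^ 2)
  (hψrec : ∀ j, 1 ≤ j → ψ (j + 1) = D (ψ j) - yj 1 * yj (j + 1))
include hDj hψ1 hψrec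

theorem psi_two : ψ 2 = -(3 * yj 1 * yj 2) := by
  rw [hψrec 1 le_rfl, hψ1]
  simp only [map_neg, sq, Derivation.leibniz, smul_eq_mul, hDj 1 le_rfl]
  ring

theorem psi_three : ψ 3 = -(3 * yj 2 ^ 2 + 4 * yj 1 * yj 3) := by
  rw [hψrec 2 (by norm_num), psi_two hDj hψ1 hψrec]
  have hD3 : D (3 : Binf) = 0 := D.map_natCast 3
  simp only [map_neg, Derivation.leibniz, smul_eq_mul, hD3, hDj 1 le_rfl, hDj 2 (by norm_num)]
  ring

end Psi

section Commutators

variable {v4 v5 : Derivation ℂ Binf Binf} {Q : Binf} (hQ : Q ∈ higherJetAlgebra)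
include hDj hQ

theorem v4_apply_totalDerivative_sub
    (hψrec : ∀ j, 1 ≤ j → ψ (j + 1) = D (ψ j) - yj 1 * yj (j + 1))
    (hv4j : ∀ j, 1 ≤ j → v4 (yj j) = ψ j) :
    v4 (D Q) - D (v4 Q) = -yj 1 * D Q := by
  refine v4.apply_apply_sub_eq_mul_of_mem_adjoin D _ ?_ hQ
  rintro _ ⟨j, hj, rfl⟩
  have hj : 1 ≤ j := le_trans one_le_two hj
  rw [hDj j hj, hv4j (j + 1) (by omega), hv4j j hj, hψrec j hj]
  ring

theorem v5_apply_totalDerivative_sub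
    (hv5j : ∀ j, 1 ≤ j → v5 (yj j) = -(C ((j : ℂ) + 1) * yj j)) :
    v5 (D Q) - D (v5 Q) = -D Q := by
  rw [← neg_one_mul]
  refine v5.apply_apply_sub_eq_mul_of_mem_adjoin D _ ?_ hQ
  rintro _ ⟨j, hj, rfl⟩
  have hj : 1 ≤ j := le_trans one_le_two hj
  rw [hDj j hj, hv5j (j + 1) (by omega), hv5j j hj]
  simp only [map_neg, Derivation.leibniz, derivation_C, smul_eq_mul, hDj j hj, Nat.cast_add,
    Nat.cast_one, map_add, map_one, Derivation.map_one_eq_zero]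
  ring

end Commutators

section Delta

variable {v4 v5 : Derivation ℂ Binf Binf} {w : ℚ} {P : Binf} (hP : P ∈ higherJetAlgebra)
include hDj hP

theorem v4_Delta (hψ1 : ψ 1 = -(yj 1) ^ 2)
    (hψrec : ∀ j, 1 ≤ j → ψ (j + 1) = D (ψ j) - yj 1 * yj (j + 1))
    (hv4j : ∀ j, 1 ≤ j → v4 (yj j) = ψ j) (hP4 : v4 P = -(C (w : ℂ) * yj 1 * P)) :
    v4 (Δ D w P) = -(C ((w + 4 : ℚ) : ℂ) * yj 1 * Δ D w P) := by
  have hv4DP : v4 (D P) = -(C (w : ℂ) * (yj 2 * P + yj 1 * D P)) - yj 1 * D P := by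
    have hcomm := v4_apply_totalDerivative_sub hDj hP hψrec hv4j
    simp only [hP4, map_neg, Derivation.leibniz, derivation_C, smul_eq_mul, hDj 1 le_rfl] at hcomm
    linear_combination hcomm
  unfold Δ
  simp only [map_sub, Derivation.leibniz, smul_eq_mul, derivation_C, hv4j 2 (by norm_num),
    hv4j 3 (by norm_num), psi_two hDj hψ1 hψrec, psi_three hDj hψ1 hψrec, hP4, hv4DP]
  rw [C_ratCast_add_four_eq w, C_ratCast_eq_three_mul w]
  ring

theorem v5_Delta (hv5j : ∀ j, 1 ≤ j → v5 (yj j) = -(C ((j : ℂ) + 1) * yj j))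
    (hP5 : v5 P = -(C (w : ℂ) * P)) :
    v5 (Δ D w P) = -(C ((w + 4 : ℚ) : ℂ) * Δ D w P) := by
  have hv5DP : v5 (D P) = -(C (w : ℂ) * D P) - D P := by
    have hcomm := v5_apply_totalDerivative_sub hDj hP hv5j
    simp only [hP5, map_neg, Derivation.leibniz, derivation_C, smul_eq_mul] at hcomm
    linear_combination hcomm
  unfold Δ
  simp only [map_sub, Derivation.leibniz, smul_eq_mul, derivation_C, hv5j 2 (by norm_num),
    hv5j 3 (by norm_num), hP5, hv5DP]
  rw [C_ratCast_add_four_eq w, C_ratCast_eq_three_mul w]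
  push_cast
  simp only [map_add, map_one, map_ofNat]
  ring

end Delta

end Prolongation

theorem Delta_is_relative_invariant_derivation_of_weight_four_general
    (D v1 v2 v3 v4 v5 : Derivation ℂ Binf Binf) (ψ : ℕ → Binf)
    (hDj : ∀ j, 1 ≤ j → D (yj j) = yj (j + 1))
    (hψ1 : ψ 1 = -(yj 1) ^ 2)
    (hψrec : ∀ j, 1 ≤ j → ψ (j + 1) = D (ψ j) - yj 1 * yj (j + 1))
    (hv1j : ∀ j, 1 ≤ j → v1 (yj j) = 0)
    (hv2j : ∀ j, 1 ≤ j → v2 (yj j) = 0)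
    (hv3j : ∀ j, 2 ≤ j → v3 (yj j) = 0)
    (hv4j : ∀ j, 1 ≤ j → v4 (yj j) = ψ j)
    (hv5j : ∀ j, 1 ≤ j → v5 (yj j) = -(C ((j : ℂ) + 1) * yj j))
    (w : ℚ) (P : Binf)
    (hPmem : P ∈ Algebra.adjoin ℂ (yj '' Set.Ici 2))
    (hP4 : v4 P = -(C ((w : ℂ)) * yj 1 * P))
    (hP5 : v5 P = -(C ((w : ℂ)) * P)) :
    Δ D w P ∈ Algebra.adjoin ℂ (yj '' Set.Ici 2) ∧
    v4 (Δ D w P) = -(C (((w + 4 : ℚ) : ℂ)) * yj 1 * Δ D w P) ∧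
    v5 (Δ D w P) = -(C (((w + 4 : ℚ) : ℂ)) * Δ D w P) ∧
    v1 P = 0 ∧ v2 P = 0 ∧ v3 P = 0 ∧
    v1 (Δ D w P) = 0 ∧ v2 (Δ D w P) = 0 ∧ v3 (Δ D w P) = 0 := by
  have hΔmem := Delta_mem_higherJetAlgebra hDj w hPmem
  have hv1 : ∀ j, 2 ≤ j → v1 (yj j) = 0 := fun j hj => hv1j j (by omega)
  have hv2 : ∀ j, 2 ≤ j → v2 (yj j) = 0 := fun j hj => hv2j j (by omega)
  exact ⟨hΔmem, v4_Delta hDj hPmem hψ1 hψrec hv4j hP4, v5_Delta hDj hPmem hv5j hP5,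
    map_eq_zero_of_mem_higherJetAlgebra v1 hv1 hPmem,
    map_eq_zero_of_mem_higherJetAlgebra v2 hv2 hPmem,
    map_eq_zero_of_mem_higherJetAlgebra v3 hv3j hPmem,
    map_eq_zero_of_mem_higherJetAlgebra v1 hv1 hΔmem,
    map_eq_zero_of_mem_higherJetAlgebra v2 hv2 hΔmem,
    map_eq_zero_of_mem_higherJetAlgebra v3 hv3j hΔmem⟩

/-- Let `v₁, …, v₅` be the prolongations of the special affine algebra
`⟨∂x, ∂y, x∂y, y∂x, x∂x − y∂y⟩` on `B = ℂ[x, y, y₁, y₂, …]` described on generators as in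
the hypotheses, with `D` the total derivative and `ψ₁ = −y₁²`,
`ψ_{j+1} = D(ψ_j) − y₁·y_{j+1}`.  Let `w ∈ ℚ` and let `P ∈ ℂ[y₂, y₃, …]` satisfy
`v₄(P) = −w·y₁·P` and `v₅(P) = −w·P`.  Then `Δ_w(P) = y₂·D(P) − (w/3)·y₃·P` again lies in
`ℂ[y₂, y₃, …]` and satisfies `v₄(Δ_w(P)) = −(w+4)·y₁·Δ_w(P)`,
`v₅(Δ_w(P)) = −(w+4)·Δ_w(P)`, while `v₁, v₂, v₃` annihilate both `P` and `Δ_w(P)`: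
`Δ_w` is a relative invariant derivation of weight `4`. -/
theorem Delta_is_relative_invariant_derivation_of_weight_four
    (D v1 v2 v3 v4 v5 : Derivation ℂ Binf Binf) (ψ : ℕ → Binf)
    (hDx : D xv = 1) (hDy : D yv = yj 1)
    (hDj : ∀ j, 1 ≤ j → D (yj j) = yj (j + 1))
    (hψ1 : ψ 1 = -(yj 1) ^ 2)
    (hψrec : ∀ j, 1 ≤ j → ψ (j + 1) = D (ψ j) - yj 1 * yj (j + 1))
    (hv1x : v1 xv = 1) (hv1y : v1 yv = 0)
    (hv1j : ∀ j, 1 ≤ j → v1 (yj j) = 0)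
    (hv2x : v2 xv = 0) (hv2y : v2 yv = 1)
    (hv2j : ∀ j, 1 ≤ j → v2 (yj j) = 0)
    (hv3x : v3 xv = 0) (hv3y : v3 yv = xv)
    (hv31 : v3 (yj 1) = 1)
    (hv3j : ∀ j, 2 ≤ j → v3 (yj j) = 0)
    (hv4x : v4 xv = yv) (hv4y : v4 yv = 0)
    (hv4j : ∀ j, 1 ≤ j → v4 (yj j) = ψ j)
    (hv5x : v5 xv = xv) (hv5y : v5 yv = -yv)
    (hv5j : ∀ j, 1 ≤ j → v5 (yj j) = -(C ((j : ℂ) + 1) * yj j))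
    (w : ℚ) (P : Binf)
    (hPmem : P ∈ Algebra.adjoin ℂ (yj '' Set.Ici 2))
    (hP4 : v4 P = -(C ((w : ℂ)) * yj 1 * P))
    (hP5 : v5 P = -(C ((w : ℂ)) * P)) :
    Δ D w P ∈ Algebra.adjoin ℂ (yj '' Set.Ici 2) ∧
    v4 (Δ D w P) = -(C (((w + 4 : ℚ) : ℂ)) * yj 1 * Δ D w P) ∧
    v5 (Δ D w P) = -(C (((w + 4 : ℚ) : ℂ)) * Δ D w P) ∧
    v1 P = 0 ∧ v2 P = 0 ∧ v3 P = 0 ∧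
    v1 (Δ D w P) = 0 ∧ v2 (Δ D w P) = 0 ∧ v3 (Δ D w P) = 0 :=
  Delta_is_relative_invariant_derivation_of_weight_four_general D v1 v2 v3 v4 v5 ψ hDj hψ1 hψrec
    hv1j hv2j hv3j hv4j hv5j w P hPmem hP4 hP5
end

section
/- Let ξ be the ℂ-derivation of ℂ[x₁, y₁, x₂, y₂] defined by ξ(x₁) = y₁, ξ(y₁) = −x₁, ξ(x₂) = y₂, ξ(y₂) = −x₂ (the infinitesimal generator of the diagonal SO(2, ℂ)-action on ordered pairs of vectors in ℂ²), extended uniquely (by the quotient rule) to a derivation ξ̂ of the rational function field ℂ(x₁, y₁, x₂, y₂). Then a rational function f ∈ ℂ(x₁, y₁, x₂, y₂) satisfies ξ̂(f) = 0 if and only if f lies in the subfield generated over ℂ by the three joint invariants x₁² + y₁², x₁x₂ + y₁y₂, and x₁y₂ − y₁x₂. In particular, x₂² + y₂² lies in this subfield, via the relation (x₁² + y₁²)(x₂² + y₂²) = (x₁x₂ + y₁y₂)² + (x₁y₂ − y₁x₂)². -/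
/-!
Let `F` be the subfield generated by `ℂ` and `J₁, J₂, J₃`; its elements are constants of `ξ̂`.
With `z = x₁ + i y₁` one has `x₁ - i y₁ = J₁ / z`, `x₂ - i y₂ = (J₂ - i J₃) / z` and
`x₂ + i y₂ = (J₂ + i J₃) / (x₁ - i y₁)`, so `ℂ(x₁, y₁, x₂, y₂) = F(z)`. As `ξ̂ z = -i z ≠ 0`, and a
derivation kills everything algebraic over its constants in characteristic zero, `z` is
transcendental over `F`. A constant `P(z) / Q(z)` then satisfies `(P Q' - P' Q)(z) ξ̂ z = 0`, so
the Wronskian of `P` and `Q` vanishes and `P / Q` lies in `F`.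
-/

open MvPolynomial

/-- The polynomial ring `ℂ[x₁, y₁, x₂, y₂]`, with variable indices
`0 ↦ x₁`, `1 ↦ y₁`, `2 ↦ x₂`, `3 ↦ y₂`. -/
abbrev A4 : Type := MvPolynomial (Fin 4) ℂ

/-- The rational function field `ℂ(x₁, y₁, x₂, y₂)`. -/
abbrev K4 : Type := FractionRing A4

/-- The embedding `ℂ[x₁, y₁, x₂, y₂] → ℂ(x₁, y₁, x₂, y₂)`. -/
noncomputable def ι : A4 →+* K4 := algebraMap A4 K4

/-- `‖v₁‖² = x₁² + y₁²`. -/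
noncomputable def J1 : A4 := X 0 ^ 2 + X 1 ^ 2
/-- `v₁·v₂ = x₁x₂ + y₁y₂`. -/
noncomputable def J2 : A4 := X 0 * X 2 + X 1 * X 3
/-- `ω(v₁,v₂) = x₁y₂ − y₁x₂`. -/
noncomputable def J3 : A4 := X 0 * X 3 - X 1 * X 2
/-- `‖v₂‖² = x₂² + y₂²`. -/
noncomputable def J4 : A4 := X 2 ^ 2 + X 3 ^ 2

namespace Polynomial

theorem exists_eq_C_mul_of_wronskian_eq_zero {F : Type*} [Field F] [CharZero F]
    {P Q : F[X]} (hQ : Q ≠ 0) (h : wronskian P Q = 0) : ∃ c, P = C c * Q := by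
  classical
  obtain ⟨g, hg, p, q, rfl, rfl, hpq⟩ :
      ∃ g ≠ 0, ∃ p q, P = g * p ∧ Q = g * q ∧ IsCoprime p q := by
    obtain ⟨p, q, hp, hq, hpq⟩ := extract_gcd P Q
    exact ⟨_, gcd_ne_zero_of_right hQ, p, q, hp, hq,
      isRelPrime_iff_isCoprime.1 (gcd_isUnit_iff_isRelPrime.1 hpq)⟩
  have hW : wronskian p q = 0 := by
    have : wronskian (g * p) (g * q) = g ^ 2 * wronskian p q := by
      simp only [wronskian, derivative_mul]; ring
    simpa [this, hg] using h
  obtain ⟨hp', hq'⟩ := hpq.wronskian_eq_zero_iff.1 hW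
  obtain ⟨a, rfl⟩ : ∃ a, p = C a := ⟨_, eq_C_of_derivative_eq_zero hp'⟩
  obtain ⟨b, rfl⟩ : ∃ b, q = C b := ⟨_, eq_C_of_derivative_eq_zero hq'⟩
  have hb : b ≠ 0 := by rintro rfl; simp at hQ
  refine ⟨a / b, ?_⟩
  rw [mul_left_comm, ← C_mul, div_mul_cancel₀ a hb]

end Polynomial

namespace Derivation

section Leibniz

variable {R A : Type*} [CommRing R] [CommRing A] [Algebra R A]

def ofAddLeibniz (d : A → A) (hadd : ∀ f g, d (f + g) = d f + d g)
    (hmul : ∀ f g, d (f * g) = d f * g + f * d g) (hR : ∀ r, d (algebraMap R A r) = 0) :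
    Derivation R A A :=
  Derivation.mk'
    { toFun := d
      map_add' := hadd
      map_smul' := fun r f => by simp [Algebra.smul_def, hmul, hR] }
    fun f g => by simp only [LinearMap.coe_mk, AddHom.coe_mk, hmul, smul_eq_mul]; ring

end Leibniz

section Constants

variable {R K : Type*} [CommRing R] [Field K] [Algebra R K]

def constants (D : Derivation R K K) : Subfield K where
  carrier := {x | D x = 0}
  zero_mem' := D.map_zero
  one_mem' := D.map_one_eq_zero
  add_mem' {a b} ha hb := by simp_all
  mul_mem' {a b} ha hb := by simp_all [leibniz]
  neg_mem' {a} ha := by simp_all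
  inv_mem' {a} ha := by simp_all [leibniz_inv]

@[simp]
theorem mem_constants {D : Derivation R K K} {x : K} : x ∈ D.constants ↔ D x = 0 := Iff.rfl

end Constants

section Transcendence

open Polynomial

variable {F K : Type*} [Field F] [CharZero F] [Field K] [Algebra F K]

theorem transcendental_of_map_ne_zero (D : Derivation F K K) {z : K} (hz : D z ≠ 0) :
    Transcendental F z := by
  intro halg
  have hint := halg.isIntegral
  have h := D.map_aeval (minpoly F z) z
  rw [minpoly.aeval, map_zero, eq_comm, smul_eq_mul, mul_eq_zero, or_iff_left hz] at h
  have hd : derivative (minpoly F z) ≠ 0 :=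
    derivative_ne_zero.2 (minpoly.natDegree_pos hint).ne'
  exact (degree_derivative_lt (minpoly.ne_zero hint)).not_ge
    (minpoly.degree_le_of_ne_zero F z hd h)

open scoped IntermediateField in
theorem mem_range_of_map_eq_zero_of_mem_adjoin_simple (D : Derivation F K K) {z f : K}
    (hz : D z ≠ 0) (hf : f ∈ F⟮z⟯) (hDf : D f = 0) : f ∈ (algebraMap F K).range := by
  obtain ⟨P, Q, rfl⟩ := (IntermediateField.mem_adjoin_simple_iff F f).1 hf
  have htr := D.transcendental_of_map_ne_zero hz
  by_cases hQ : Q = 0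
  · simp [hQ]
  have hQz : aeval z Q ≠ 0 := fun h => htr ⟨Q, hQ, h⟩
  have hW : wronskian P Q = 0 := by
    by_contra hW
    refine htr ⟨_, hW, ?_⟩
    rw [leibniz_div, map_aeval, map_aeval] at hDf
    simp only [smul_eq_mul] at hDf
    rw [wronskian, map_sub, map_mul, map_mul]
    refine mul_right_cancel₀ hz (mul_left_cancel₀ (pow_ne_zero 2 (inv_ne_zero hQz)) ?_)
    linear_combination -hDf
  obtain ⟨c, rfl⟩ := exists_eq_C_mul_of_wronskian_eq_zero hQ hW
  exact ⟨c, by simp [hQz]⟩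

end Transcendence

end Derivation

theorem IsFractionRing.subfield_eq_top_of_C_mem_of_X_mem {σ R K : Type*} [CommRing R] [Field K]
    [Algebra (MvPolynomial σ R) K] [IsFractionRing (MvPolynomial σ R) K] {S : Subfield K}
    (hC : ∀ c, algebraMap (MvPolynomial σ R) K (C c) ∈ S)
    (hX : ∀ i, algebraMap (MvPolynomial σ R) K (X i) ∈ S) : S = ⊤ := by
  rw [eq_top_iff, ← IsFractionRing.closure_range_algebraMap (MvPolynomial σ R) K,
    Subfield.closure_le]
  rintro _ ⟨p, rfl⟩
  induction p using MvPolynomial.induction_on with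
  | C c => exact hC c
  | add p q hp hq => rw [map_add]; exact S.add_mem hp hq
  | mul_X p i hp => rw [map_mul]; exact S.mul_mem hp (hX i)

namespace Subfield

variable {K : Type*} [Field K] (S : Subfield K) {i : K}

theorem mem_of_add_mul_mem_of_sub_mul_mem (hi : i * i = -1) (h2 : (2 : K) ≠ 0) (hiS : i ∈ S)
    {u v : K} (hadd : u + i * v ∈ S) (hsub : u - i * v ∈ S) : u ∈ S ∧ v ∈ S := by
  have hi0 : i ≠ 0 := by rintro rfl; simp at hi
  have h2S : (2 : K) ∈ S := ofNat_mem S 2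
  constructor
  · convert S.div_mem (S.add_mem hadd hsub) h2S using 1
    field_simp; ring
  · convert S.div_mem (S.sub_mem hadd hsub) (S.mul_mem h2S hiS) using 1
    field_simp; ring

theorem coords_mem_of_joint_invariants_mem (hi : i * i = -1) (h2 : (2 : K) ≠ 0) (hiS : i ∈ S)
    {x₁ y₁ x₂ y₂ : K} (hz : x₁ + i * y₁ ≠ 0) (hz' : x₁ - i * y₁ ≠ 0) (hzS : x₁ + i * y₁ ∈ S)
    (h₁ : x₁ ^ 2 + y₁ ^ 2 ∈ S) (h₂ : x₁ * x₂ + y₁ * y₂ ∈ S) (h₃ : x₁ * y₂ - y₁ * x₂ ∈ S) :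
    (x₁ ∈ S ∧ y₁ ∈ S) ∧ (x₂ ∈ S ∧ y₂ ∈ S) := by
  have hz'S : x₁ - i * y₁ ∈ S := by
    convert S.div_mem h₁ hzS using 1
    field_simp; linear_combination -y₁ ^ 2 * hi
  refine ⟨S.mem_of_add_mul_mem_of_sub_mul_mem hi h2 hiS hzS hz'S,
    S.mem_of_add_mul_mem_of_sub_mul_mem hi h2 hiS ?_ ?_⟩
  · convert S.div_mem (S.add_mem h₂ (S.mul_mem hiS h₃)) hz'S using 1
    field_simp; linear_combination -(y₁ * y₂) * hi
  · convert S.div_mem (S.sub_mem h₂ (S.mul_mem hiS h₃)) hzS using 1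
    field_simp; linear_combination -(y₁ * y₂) * hi

end Subfield

noncomputable def rotDerivation : Derivation ℂ A4 A4 := mkDerivation ℂ ![X 1, -X 0, X 3, -X 2]

@[simp] theorem rotDerivation_X_zero : rotDerivation (X 0) = X 1 := mkDerivation_X _ _ _

@[simp] theorem rotDerivation_X_one : rotDerivation (X 1) = -X 0 := mkDerivation_X _ _ _

@[simp] theorem rotDerivation_X_two : rotDerivation (X 2) = X 3 := mkDerivation_X _ _ _

@[simp] theorem rotDerivation_X_three : rotDerivation (X 3) = -X 2 := mkDerivation_X _ _ _

theorem eq_rotDerivation {ξ : Derivation ℂ A4 A4}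
    (hx1 : ξ (X 0) = X 1) (hy1 : ξ (X 1) = -(X 0))
    (hx2 : ξ (X 2) = X 3) (hy2 : ξ (X 3) = -(X 2)) : ξ = rotDerivation :=
  derivation_ext fun i => by fin_cases i <;> simp [*]

theorem rotDerivation_J1 : rotDerivation J1 = 0 := by
  simp only [J1, map_add, Derivation.leibniz_pow, rotDerivation_X_zero, rotDerivation_X_one,
    smul_eq_mul, nsmul_eq_mul]
  ring

theorem rotDerivation_J2 : rotDerivation J2 = 0 := by
  simp only [J2, map_add, Derivation.leibniz, rotDerivation_X_zero, rotDerivation_X_one,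
    rotDerivation_X_two, rotDerivation_X_three, smul_eq_mul]
  ring

theorem rotDerivation_J3 : rotDerivation J3 = 0 := by
  simp only [J3, map_sub, Derivation.leibniz, rotDerivation_X_zero, rotDerivation_X_one,
    rotDerivation_X_two, rotDerivation_X_three, smul_eq_mul]
  ring

noncomputable def zPoly : A4 := X 0 + C Complex.I * X 1

theorem rotDerivation_zPoly : rotDerivation zPoly = -C Complex.I * zPoly := by
  have hI : (C Complex.I * C Complex.I : A4) = -1 := by rw [← C_mul, Complex.I_mul_I, C_neg, C_1]
  simp only [zPoly, map_add, Derivation.leibniz, derivation_C, rotDerivation_X_zero,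
    rotDerivation_X_one, smul_eq_mul]
  linear_combination X 1 * hI

theorem ι_ne_zero_of_eval_ne_zero {p : A4} (v : Fin 4 → ℂ) (hp : eval v p ≠ 0) : ι p ≠ 0 :=
  (map_ne_zero_iff ι (IsFractionRing.injective A4 K4)).2 (by rintro rfl; simp at hp)

noncomputable def jointInvariants : Subfield K4 :=
  Subfield.closure ((Set.range fun c : ℂ => ι (C c)) ∪ {ι J1, ι J2, ι J3})

theorem ι_C_mem_jointInvariants (c : ℂ) : ι (C c) ∈ jointInvariants :=
  Subfield.subset_closure (Or.inl ⟨c, rfl⟩)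

theorem ι_J1_mem_jointInvariants : ι J1 ∈ jointInvariants :=
  Subfield.subset_closure (Or.inr (by simp))

theorem ι_J2_mem_jointInvariants : ι J2 ∈ jointInvariants :=
  Subfield.subset_closure (Or.inr (by simp))

theorem ι_J3_mem_jointInvariants : ι J3 ∈ jointInvariants :=
  Subfield.subset_closure (Or.inr (by simp))

theorem J1_mul_J4 : J1 * J4 = J2 ^ 2 + J3 ^ 2 := by
  simp only [J1, J2, J3, J4]; ring

theorem ι_J4_mem_jointInvariants : ι J4 ∈ jointInvariants := by
  have hJ1 : ι J1 ≠ 0 := ι_ne_zero_of_eval_ne_zero ![1, 0, 0, 0] (by simp [J1])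
  have hJ4 : ι J4 = (ι J2 ^ 2 + ι J3 ^ 2) / ι J1 := by
    rw [eq_div_iff hJ1, ← map_pow, ← map_pow, ← map_add, ← map_mul, mul_comm, J1_mul_J4]
  rw [hJ4]
  exact div_mem (add_mem (pow_mem ι_J2_mem_jointInvariants 2)
    (pow_mem ι_J3_mem_jointInvariants 2)) ι_J1_mem_jointInvariants

theorem jointInvariants_le_constants (D : Derivation ℂ K4 K4)
    (hD : ∀ p, D (ι p) = ι (rotDerivation p)) : jointInvariants ≤ D.constants := by
  have h : ∀ p, rotDerivation p = 0 → ι p ∈ D.constants := fun p hp => by simp [hD, hp]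
  refine Subfield.closure_le.2 ?_
  rintro _ (⟨c, rfl⟩ | hJ)
  · exact h _ (rotDerivation.map_algebraMap c)
  · simp only [Set.mem_insert_iff, Set.mem_singleton_iff] at hJ
    rcases hJ with rfl | rfl | rfl
    exacts [h _ rotDerivation_J1, h _ rotDerivation_J2, h _ rotDerivation_J3]

theorem adjoin_ι_zPoly_eq_top : IntermediateField.adjoin jointInvariants {ι zPoly} = ⊤ := by
  set E := IntermediateField.adjoin jointInvariants {ι zPoly}
  have hF : ∀ x ∈ jointInvariants, x ∈ E := fun x hx => E.algebraMap_mem ⟨x, hx⟩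
  have hi : ι (C Complex.I) * ι (C Complex.I) = -1 := by
    rw [← map_mul, ← C_mul, Complex.I_mul_I, C_neg, C_1, map_neg, map_one]
  have hz : ι (X 0) + ι (C Complex.I) * ι (X 1) = ι zPoly := by simp [zPoly]
  have hz' : ι (X 0) - ι (C Complex.I) * ι (X 1) = ι (X 0 - C Complex.I * X 1) := by simp
  obtain ⟨⟨hx₁, hy₁⟩, hx₂, hy₂⟩ := E.toSubfield.coords_mem_of_joint_invariants_mem hi
    two_ne_zero (hF _ (ι_C_mem_jointInvariants _))
    (hz ▸ ι_ne_zero_of_eval_ne_zero ![1, 0, 0, 0] (by simp [zPoly]))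
    (hz' ▸ ι_ne_zero_of_eval_ne_zero ![1, 0, 0, 0] (by simp))
    (hz ▸ IntermediateField.mem_adjoin_simple_self _ _)
    (by simpa [J1] using hF _ ι_J1_mem_jointInvariants)
    (by simpa [J2] using hF _ ι_J2_mem_jointInvariants)
    (by simpa [J3] using hF _ ι_J3_mem_jointInvariants)
  rw [← IntermediateField.toSubfield_inj]
  refine IsFractionRing.subfield_eq_top_of_C_mem_of_X_mem
    (fun c => hF _ (ι_C_mem_jointInvariants c)) fun i => ?_
  fin_cases i
  exacts [hx₁, hy₁, hx₂, hy₂]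

/-- Let `ξ` be the ℂ-derivation of `ℂ[x₁, y₁, x₂, y₂]` with
`ξ(x₁) = y₁`, `ξ(y₁) = −x₁`, `ξ(x₂) = y₂`, `ξ(y₂) = −x₂` (the diagonal `SO(2,ℂ)`-action),
extended uniquely (by the quotient rule) to a derivation `ξ̂` of `ℂ(x₁, y₁, x₂, y₂)`.
Then `ξ̂(f) = 0` if and only if `f` lies in the subfield generated over `ℂ` by
`x₁² + y₁²`, `x₁x₂ + y₁y₂` and `x₁y₂ − y₁x₂`.  In particular `x₂² + y₂²` lies in this
subfield, via `(x₁² + y₁²)(x₂² + y₂²) = (x₁x₂ + y₁y₂)² + (x₁y₂ − y₁x₂)²`. -/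
theorem so2_joint_rational_invariants
    (ξ : Derivation ℂ A4 A4)
    (hx1 : ξ (X 0) = X 1) (hy1 : ξ (X 1) = -(X 0))
    (hx2 : ξ (X 2) = X 3) (hy2 : ξ (X 3) = -(X 2))
    (ξ' : K4 → K4)
    (hadd : ∀ f g : K4, ξ' (f + g) = ξ' f + ξ' g)
    (hmul : ∀ f g : K4, ξ' (f * g) = ξ' f * g + f * ξ' g)
    (hext : ∀ p : A4, ξ' (ι p) = ι (ξ p)) :
    (∀ f : K4,
      ξ' f = 0 ↔
      f ∈ Subfield.closure
        ((Set.range fun c : ℂ => ι (C c)) ∪ {ι J1, ι J2, ι J3})) ∧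
    J1 * J4 = J2 ^ 2 + J3 ^ 2 ∧
    ι J4 ∈ Subfield.closure
      ((Set.range fun c : ℂ => ι (C c)) ∪ {ι J1, ι J2, ι J3}) := by
  obtain rfl := eq_rotDerivation hx1 hy1 hx2 hy2
  have hC : ∀ c, ξ' (algebraMap ℂ K4 c) = 0 := fun c => by
    rw [IsScalarTower.algebraMap_apply ℂ A4 K4]
    exact (hext _).trans (by rw [Derivation.map_algebraMap, map_zero])
  have hle := jointInvariants_le_constants (.ofAddLeibniz ξ' hadd hmul hC) hext
  refine ⟨fun f => ⟨fun hf => ?_, fun hf => hle hf⟩, J1_mul_J4, ι_J4_mem_jointInvariants⟩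
  have hz : ξ' (ι zPoly) ≠ 0 := by
    rw [hext, rotDerivation_zPoly]
    exact ι_ne_zero_of_eval_ne_zero ![1, 0, 0, 0] (by simp [zPoly])
  obtain ⟨c, rfl⟩ := (Derivation.ofAddLeibniz (R := jointInvariants) ξ' hadd hmul
    fun c => hle c.2).mem_range_of_map_eq_zero_of_mem_adjoin_simple hz
      (adjoin_ι_zPoly_eq_top ▸ IntermediateField.mem_top) hf
  exact c.2
end
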